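/- Let ν be a Borel probability measure on Σ^∞ and let s < s' be real numbers such that for every n ∈ ℕ and every w ∈ Σ^n, if ν(C_w) > 0 then ν(C_w) ≥ 2^{−s·n}. Define d : Σ^* → [0,∞) by d(w) = 2^{s'·|w|}·ν(C_w). Then d is an s'-gale, and ν({X ∈ Σ^∞ : limsup_{n→∞} d(X↾n) = ∞}) = 1. -/

import Mathlib

/-!
The children `w0`, `w1` of a cylinder partition it, so additivity of `ν` makes `d` an `s'`-gale.
The cylinders of `ν`-measure zero are countably many, so `ν`-almost every `X` has only prefixes
of positive measure; for these the hypothesis gives `d (X↾n) ≥ 2^{(s' - s) n} → ∞`.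
-/

open Filter MeasureTheory
open scoped ENNReal

/-- The first `n` bits of an infinite binary sequence, as a finite string. -/
def pre (X : ℕ → Bool) (n : ℕ) : List Bool := List.ofFn (fun i : Fin n => X i)

/-- The cylinder set of a finite binary string. -/
def cyl (w : List Bool) : Set (ℕ → Bool) := {X | pre X w.length = w}

lemma pre_length (X : ℕ → Bool) (n : ℕ) : (pre X n).length = n := by simp [pre]

lemma pre_succ (X : ℕ → Bool) (n : ℕ) : pre X (n + 1) = pre X n ++ [X n] := by
  simp [pre, List.ofFn_succ', -List.ofFn_succ]

lemma mem_cyl_pre (X : ℕ → Bool) (n : ℕ) : X ∈ cyl (pre X n) := by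
  simp [cyl, pre_length]

lemma mem_cyl_append_singleton {X : ℕ → Bool} {w : List Bool} {b : Bool} :
    X ∈ cyl (w ++ [b]) ↔ X ∈ cyl w ∧ X w.length = b := by
  simp [cyl, pre_succ]

lemma measurableSet_cyl (w : List Bool) : MeasurableSet (cyl w) :=
  (measurable_pi_lambda (fun (X : ℕ → Bool) (i : Fin w.length) => X i)
    fun _ => measurable_pi_apply _)
    (Set.to_countable {v : Fin w.length → Bool | List.ofFn v = w}).measurableSet

lemma cyl_eq_union_append (w : List Bool) :
    cyl w = cyl (w ++ [false]) ∪ cyl (w ++ [true]) := by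
  ext X
  simp only [Set.mem_union, mem_cyl_append_singleton]
  cases X w.length <;> simp

lemma disjoint_cyl_append (w : List Bool) :
    Disjoint (cyl (w ++ [false])) (cyl (w ++ [true])) :=
  Set.disjoint_left.2 fun _ h₀ h₁ =>
    Bool.false_ne_true <| (mem_cyl_append_singleton.1 h₀).2.symm.trans
      (mem_cyl_append_singleton.1 h₁).2

lemma measure_cyl_append_false_add_true (μ : Measure (ℕ → Bool)) (w : List Bool) :
    μ (cyl (w ++ [false])) + μ (cyl (w ++ [true])) = μ (cyl w) := by
  rw [cyl_eq_union_append w, measure_union (disjoint_cyl_append w) (measurableSet_cyl _)]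

lemma ae_forall_measure_cyl_pre_pos (μ : Measure (ℕ → Bool)) :
    ∀ᵐ X ∂μ, ∀ n, 0 < μ (cyl (pre X n)) := by
  have hnull : μ (⋃ w ∈ {w | μ (cyl w) = 0}, cyl w) = 0 :=
    (measure_biUnion_null_iff (Set.to_countable _)).2 fun _ hw => hw
  refine measure_mono_null (fun X hX => ?_) hnull
  obtain ⟨n, hn⟩ := not_forall.1 hX
  exact Set.mem_biUnion (nonpos_iff_eq_zero.1 (not_lt.1 hn)) (mem_cyl_pre X n)

noncomputable def cylCapital (μ : Measure (ℕ → Bool)) (t : ℝ) (w : List Bool) : ℝ :=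
  2 ^ (t * w.length) * (μ (cyl w)).toReal

lemma cylCapital_append_false_add_true (μ : Measure (ℕ → Bool)) [IsFiniteMeasure μ] (t : ℝ)
    (w : List Bool) :
    cylCapital μ t (w ++ [false]) + cylCapital μ t (w ++ [true]) = 2 ^ t * cylCapital μ t w := by
  have hsum : (μ (cyl (w ++ [false]))).toReal + (μ (cyl (w ++ [true]))).toReal =
      (μ (cyl w)).toReal := by
    rw [← ENNReal.toReal_add (measure_ne_top μ _) (measure_ne_top μ _),
      measure_cyl_append_false_add_true]
  have hpow : (2 : ℝ) ^ (t * (w.length + 1 : ℕ)) = 2 ^ t * 2 ^ (t * w.length) := by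
    rw [← Real.rpow_add two_pos]
    push_cast
    ring_nf
  simp only [cylCapital, List.length_append, List.length_singleton]
  rw [hpow, ← hsum]
  ring

lemma two_rpow_le_cylCapital {μ : Measure (ℕ → Bool)} [IsFiniteMeasure μ] {s : ℝ}
    {w : List Bool} (h : (2 : ℝ≥0∞) ^ (-(s * w.length)) ≤ μ (cyl w)) (t : ℝ) :
    (2 : ℝ) ^ ((t - s) * w.length) ≤ cylCapital μ t w := by
  have h' : (2 : ℝ) ^ (-(s * w.length)) ≤ (μ (cyl w)).toReal := by
    simpa [← ENNReal.toReal_rpow] using ENNReal.toReal_mono (measure_ne_top μ _) h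
  calc (2 : ℝ) ^ ((t - s) * w.length) = 2 ^ (t * w.length) * 2 ^ (-(s * w.length)) := by
        rw [← Real.rpow_add two_pos]; ring_nf
    _ ≤ cylCapital μ t w := by unfold cylCapital; gcongr

lemma tendsto_two_rpow_mul_natCast {c : ℝ} (hc : 0 < c) :
    Tendsto (fun n : ℕ => (2 : ℝ) ^ (c * n)) atTop atTop := by
  simp_rw [Real.rpow_mul zero_le_two, Real.rpow_natCast]
  exact tendsto_pow_atTop_atTop_of_one_lt (Real.one_lt_rpow one_lt_two hc)

/-- If every cylinder of positive `ν`-measure has measure at least `2^{-s|w|}` and `s < s'`, then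
`d w = 2^{s'|w|} ν(C_w)` is an `s'`-gale whose capital is unbounded `ν`-almost surely. -/
theorem gale_from_short_seed_distribution
    (ν : Measure (ℕ → Bool)) [IsProbabilityMeasure ν]
    (s s' : ℝ) (hss' : s < s')
    (hν : ∀ w : List Bool, 0 < ν (cyl w) →
      (2 : ℝ≥0∞) ^ (-(s * (w.length : ℝ))) ≤ ν (cyl w))
    (d : List Bool → ℝ)
    (hd : ∀ w, d w = 2 ^ (s' * (w.length : ℝ)) * (ν (cyl w)).toReal) :
    (∀ w, d (w ++ [false]) + d (w ++ [true]) = 2 ^ s' * d w) ∧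
    ν {X : ℕ → Bool | ∀ C : ℝ, ∃ᶠ n in atTop, C < d (pre X n)} = 1 := by
  obtain rfl : d = cylCapital ν s' := funext hd
  refine ⟨cylCapital_append_false_add_true ν s', ?_⟩
  refine (measure_congr (ae_eq_univ.2 ?_)).trans measure_univ
  filter_upwards [ae_forall_measure_cyl_pre_pos ν] with X hX C
  have hgrowth : Tendsto (fun n => cylCapital ν s' (pre X n)) atTop atTop := by
    refine tendsto_atTop_mono (fun n => ?_) (tendsto_two_rpow_mul_natCast (sub_pos.2 hss'))
    simpa only [pre_length] using two_rpow_le_cylCapital (hν _ (hX n)) s'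
  exact (hgrowth.eventually_gt_atTop C).frequently
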